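/- For every nonnegative integer n, there exist a linearly ordered set (Ω, ≤) and a set C of n subsets of Ω, each convex with respect to ≤, such that the smallest patchwork on Ω containing C has exactly 2n² − n + 2 elements. (For example, one may take Ω = {−n, −n+1, …, n} with the usual order and C = { [−n+i, i−1] : i = 1, …, n }, where [a, b] denotes {k ∈ ℤ : a ≤ k ≤ b}.) -/

import Mathlib

/-- A subset `A` is convex with respect to an order relation `le` if whenever
`p ≤ q ≤ r` with `p ∈ A` and `r ∈ A`, also `q ∈ A`. -/
def IsConvex {Ω : Type*} (le : Ω → Ω → Prop) (A : Set Ω) : Prop :=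
  ∀ p q r : Ω, le p q → le q r → p ∈ A → r ∈ A → q ∈ A

/-- Two subsets overlap if they have nonempty intersection and neither contains the other. -/
def Overlap {Ω : Type*} (A B : Set Ω) : Prop :=
  (A ∩ B).Nonempty ∧ ¬ A ⊆ B ∧ ¬ B ⊆ A

/-- A patchwork on `Ω` is a set of subsets of `Ω` containing `∅` and `Ω` and closed under
intersection, union and difference of overlapping pairs. -/
def IsPatchwork {Ω : Type*} (P : Set (Set Ω)) : Prop :=
  ∅ ∈ P ∧ Set.univ ∈ P ∧
    ∀ A ∈ P, ∀ B ∈ P, Overlap A B → A ∩ B ∈ P ∧ A ∪ B ∈ P ∧ A \ B ∈ P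

/-- A member of a patchwork is autonomous if it is nonempty and overlaps no member. -/
def Autonomous {Ω : Type*} (P : Set (Set Ω)) (A : Set Ω) : Prop :=
  A ∈ P ∧ A.Nonempty ∧ ∀ B ∈ P, ¬ Overlap A B

/-- The cohort under `B`: the maximal autonomous proper subsets of `B`. -/
def Cohort {Ω : Type*} (P : Set (Set Ω)) (B : Set Ω) : Set (Set Ω) :=
  {A | Autonomous P A ∧ A ⊂ B ∧ ∀ C, Autonomous P C → C ⊂ B → A ⊆ C → A = C}

/-- Two members of a patchwork are adjacent if they are disjoint and their union is a member. -/
def Adjacent {Ω : Type*} (P : Set (Set Ω)) (A B : Set Ω) : Prop :=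
  Disjoint A B ∧ A ∪ B ∈ P

/-- The smallest patchwork on `Ω` containing `C`. -/
def patchworkClosure {Ω : Type*} (C : Set (Set Ω)) : Set (Set Ω) :=
  ⋂₀ {P | IsPatchwork P ∧ C ⊆ P}

/-!
Take `Ω = ℤ` and the `n` windows `[i - n, i - 1]`, `1 ≤ i ≤ n`, all of which contain `0`. Their
patchwork closure consists of `∅`, `ℤ` and the nonempty intervals inside `[1 - n, n - 1]`.
These form a patchwork because two overlapping intervals are staggered, so their intersection,
union and differences are again intervals. Conversely, intersecting two windows gives every
interval ending or starting at `0`, unions of those give every interval around `0`, and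
differences of these give the intervals on either side of `0`. The intervals `[a, b]` in a
`k`-element range correspond to the unordered pairs `{a, b}`, so there are `(k + 1).choose 2`
of them, which is `2n² - n` for `k = 2n - 1`.
-/

open Set

lemma isConvex_Icc {α : Type*} [Preorder α] (a b : α) : IsConvex (· ≤ ·) (Icc a b) :=
  fun _ _ _ hpq hqr hp hr => ⟨hp.1.trans hpq, hqr.trans hr.2⟩

section Patchwork

variable {Ω : Type*} {P C : Set (Set Ω)} {A B : Set Ω}

lemma IsPatchwork.inter_mem (hP : IsPatchwork P) (hA : A ∈ P) (hB : B ∈ P) (h : Overlap A B) :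
    A ∩ B ∈ P :=
  (hP.2.2 A hA B hB h).1

lemma IsPatchwork.union_mem (hP : IsPatchwork P) (hA : A ∈ P) (hB : B ∈ P) (h : Overlap A B) :
    A ∪ B ∈ P :=
  (hP.2.2 A hA B hB h).2.1

lemma IsPatchwork.diff_mem (hP : IsPatchwork P) (hA : A ∈ P) (hB : B ∈ P) (h : Overlap A B) :
    A \ B ∈ P :=
  (hP.2.2 A hA B hB h).2.2

lemma Overlap.symm (h : Overlap A B) : Overlap B A :=
  ⟨by rw [inter_comm]; exact h.1, h.2.2, h.2.1⟩

lemma patchworkClosure_subset (hP : IsPatchwork P) (hC : C ⊆ P) : patchworkClosure C ⊆ P :=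
  sInter_subset_of_mem ⟨hP, hC⟩

lemma subset_patchworkClosure (h : ∀ Q, IsPatchwork Q → C ⊆ Q → P ⊆ Q) :
    P ⊆ patchworkClosure C :=
  fun _ hA => mem_sInter.2 fun Q (hQ : IsPatchwork Q ∧ C ⊆ Q) => h Q hQ.1 hQ.2 hA

end Patchwork

section Intervals

variable {α : Type*}

lemma overlap_Icc_Icc [Preorder α] {a b c d : α} (hac : a < c) (hcb : c ≤ b) (hbd : b < d) :
    Overlap (Icc a b) (Icc c d) :=
  ⟨⟨c, ⟨hac.le, hcb⟩, le_rfl, hcb.trans hbd.le⟩,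
    fun h => (h ⟨le_rfl, hac.le.trans hcb⟩).1.not_gt hac,
    fun h => (h ⟨hcb.trans hbd.le, le_rfl⟩).2.not_gt hbd⟩

lemma staggered_of_overlap_Icc [LinearOrder α] {a b c d : α} (h : Overlap (Icc a b) (Icc c d)) :
    a < c ∧ c ≤ b ∧ b < d ∨ c < a ∧ a ≤ d ∧ d < b := by
  obtain ⟨⟨x, ⟨hax, hxb⟩, hcx, hxd⟩, hAB, hBA⟩ := h
  rw [Icc_subset_Icc_iff (hax.trans hxb)] at hAB
  rw [Icc_subset_Icc_iff (hcx.trans hxd)] at hBA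
  rcases lt_or_ge a c with hac | hca
  · exact Or.inl ⟨hac, hcx.trans hxb, not_le.1 fun hdb => hBA ⟨hac.le, hdb⟩⟩
  · have hbd : d < b := not_le.1 fun hbd => hAB ⟨hca, hbd⟩
    exact Or.inr ⟨hca.lt_of_ne fun hac => hBA ⟨hac.ge, hbd.le⟩, hax.trans hxd, hbd⟩

def intervalsWithin [Preorder α] (lo hi : α) : Set (Set α) :=
  {A | ∃ a b, lo ≤ a ∧ a ≤ b ∧ b ≤ hi ∧ Icc a b = A}

lemma encard_intervalsWithin [LinearOrder α] [LocallyFiniteOrder α] (lo hi : α) :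
    (intervalsWithin lo hi).encard = ((Finset.Icc lo hi).card + 1).choose 2 := by
  let f : Sym2 α → Set α := fun z => Icc z.inf z.sup
  have hf : Function.Injective f := fun z w h =>
    Sym2.inf_eq_inf_and_sup_eq_sup.1 ((Icc_eq_Icc_iff z.inf_le_sup).1 h)
  have himage : f '' (Finset.Icc lo hi).sym2 = intervalsWithin lo hi := by
    ext A
    constructor
    · rintro ⟨z, hz, rfl⟩
      induction z with | _ a b
      simp only [Finset.mem_coe, Finset.mem_sym2_iff, Sym2.mem_iff, forall_eq_or_imp,
        forall_eq, Finset.mem_Icc] at hz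
      exact ⟨a ⊓ b, a ⊔ b, le_inf hz.1.1 hz.2.1, inf_le_sup, sup_le hz.1.2 hz.2.2, rfl⟩
    · rintro ⟨a, b, hla, hab, hbh, rfl⟩
      refine ⟨s(a, b), ?_, by simp [f, hab]⟩
      simp only [Finset.mem_coe, Finset.mem_sym2_iff, Sym2.mem_iff, forall_eq_or_imp,
        forall_eq, Finset.mem_Icc]
      exact ⟨⟨hla, hab.trans hbh⟩, hla.trans hab, hbh⟩
  rw [← himage, hf.injOn.encard_image, encard_coe_eq_coe_finsetCard, Finset.card_sym2]

end Intervals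

section Integers

variable {a b c d : ℤ}

lemma Int.Icc_inter_union_sdiff_Icc (hac : a < c) (hcb : c ≤ b) (hbd : b < d) :
    Icc a b ∩ Icc c d = Icc c b ∧ Icc a b ∪ Icc c d = Icc a d ∧
      Icc a b \ Icc c d = Icc a (c - 1) ∧ Icc c d \ Icc a b = Icc (b + 1) d := by
  refine ⟨?_, ?_, ?_, ?_⟩ <;> ext x <;>
    simp only [mem_inter_iff, mem_union, mem_sdiff, mem_Icc] <;> omega

lemma isPatchwork_intervalsWithin (lo hi : ℤ) :
    IsPatchwork (insert ∅ (insert univ (intervalsWithin lo hi))) := by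
  refine ⟨mem_insert _ _, mem_insert_of_mem _ (mem_insert _ _), ?_⟩
  intro A hA B hB hAB
  have hA' : A ∈ intervalsWithin lo hi := by
    rcases hA with rfl | rfl | hA
    · simp [Overlap] at hAB
    · exact absurd (subset_univ B) hAB.2.2
    · exact hA
  have hB' : B ∈ intervalsWithin lo hi := by
    rcases hB with rfl | rfl | hB
    · simp [Overlap] at hAB
    · exact absurd (subset_univ A) hAB.2.1
    · exact hB
  obtain ⟨a, b, hla, hab, hbh, rfl⟩ := hA'
  obtain ⟨c, d, hlc, hcd, hdh, rfl⟩ := hB'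
  have mem {x y : ℤ} (hlx : lo ≤ x) (hxy : x ≤ y) (hyh : y ≤ hi) :
      Icc x y ∈ insert ∅ (insert univ (intervalsWithin lo hi)) :=
    mem_insert_of_mem _ (mem_insert_of_mem _ ⟨x, y, hlx, hxy, hyh, rfl⟩)
  rcases staggered_of_overlap_Icc hAB with ⟨hac, hcb, hbd⟩ | ⟨hca, had, hdb⟩
  · obtain ⟨hinter, hunion, hdiff, -⟩ := Int.Icc_inter_union_sdiff_Icc hac hcb hbd
    rw [hinter, hunion, hdiff]
    exact ⟨mem (by omega) hcb hbh, mem hla (by omega) hdh, mem hla (by omega) (by omega)⟩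
  · obtain ⟨hinter, hunion, -, hdiff⟩ := Int.Icc_inter_union_sdiff_Icc hca had hdb
    rw [inter_comm, hinter, union_comm, hunion, hdiff]
    exact ⟨mem hla had hdh, mem hlc (by omega) hbh, mem (by omega) (by omega) hbh⟩

lemma IsPatchwork.Icc_mem_of_staggered {P : Set (Set ℤ)} (hP : IsPatchwork P) (hA : Icc a b ∈ P)
    (hB : Icc c d ∈ P) (hac : a < c) (hcb : c ≤ b) (hbd : b < d) :
    Icc c b ∈ P ∧ Icc a d ∈ P ∧ Icc a (c - 1) ∈ P ∧ Icc (b + 1) d ∈ P := by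
  obtain ⟨hinter, hunion, hdiff, hdiff'⟩ := Int.Icc_inter_union_sdiff_Icc hac hcb hbd
  have hAB := overlap_Icc_Icc hac hcb hbd
  refine ⟨?_, ?_, ?_, ?_⟩
  · exact hinter ▸ hP.inter_mem hA hB hAB
  · exact hunion ▸ hP.union_mem hA hB hAB
  · exact hdiff ▸ hP.diff_mem hA hB hAB
  · exact hdiff' ▸ hP.diff_mem hB hA hAB.symm

end Integers

def windows (n : ℕ) : Set (Set ℤ) :=
  (fun i : ℤ => Icc (i - n) (i - 1)) '' Icc 1 n

section Windows

variable {n : ℕ} {Q : Set (Set ℤ)} {a b : ℤ}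

lemma Icc_mem_windows (ha : 1 - (n : ℤ) ≤ a) (ha0 : a ≤ 0) (hb : b = a + n - 1) :
    Icc a b ∈ windows n :=
  ⟨a + n, ⟨by omega, by omega⟩, by simp only [hb, add_sub_cancel_right]⟩

lemma IsPatchwork.Icc_to_zero_mem_of_windows_subset (hQ : IsPatchwork Q) (hC : windows n ⊆ Q)
    (ha : 1 - (n : ℤ) ≤ a) (ha0 : a ≤ 0) : Icc a 0 ∈ Q := by
  have hfirst : Icc (1 - (n : ℤ)) 0 ∈ Q := hC (Icc_mem_windows le_rfl (by omega) (by omega))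
  rcases ha.eq_or_lt with rfl | ha
  · exact hfirst
  · exact (hQ.Icc_mem_of_staggered hfirst (hC (Icc_mem_windows ha.le ha0 rfl)) ha ha0
      (by omega)).1

lemma IsPatchwork.Icc_from_zero_mem_of_windows_subset (hQ : IsPatchwork Q) (hC : windows n ⊆ Q)
    (hb0 : 0 ≤ b) (hb : b ≤ (n : ℤ) - 1) : Icc 0 b ∈ Q := by
  have hlast : Icc 0 ((n : ℤ) - 1) ∈ Q := hC (Icc_mem_windows (by omega) le_rfl (by omega))
  rcases hb.eq_or_lt with rfl | hb
  · exact hlast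
  · have hwindow : Icc (b + 1 - n) b ∈ Q := hC (Icc_mem_windows (by omega) (by omega) (by omega))
    exact (hQ.Icc_mem_of_staggered hwindow hlast (by omega) hb0 hb).1

lemma IsPatchwork.Icc_around_zero_mem_of_windows_subset (hQ : IsPatchwork Q)
    (hC : windows n ⊆ Q) (ha : 1 - (n : ℤ) ≤ a) (ha0 : a ≤ 0) (hb0 : 0 ≤ b) (hb : b ≤ (n : ℤ) - 1) :
    Icc a b ∈ Q := by
  have hto := hQ.Icc_to_zero_mem_of_windows_subset hC ha ha0
  have hfrom := hQ.Icc_from_zero_mem_of_windows_subset hC hb0 hb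
  rcases ha0.eq_or_lt with rfl | ha0
  · exact hfrom
  rcases hb0.eq_or_lt with rfl | hb0
  · exact hto
  exact (hQ.Icc_mem_of_staggered hto hfrom ha0 le_rfl hb0).2.1

lemma IsPatchwork.intervalsWithin_subset_of_windows_subset (hQ : IsPatchwork Q)
    (hC : windows n ⊆ Q) : intervalsWithin (1 - (n : ℤ)) (n - 1) ⊆ Q := by
  rintro _ ⟨a, b, ha, hab, hb, rfl⟩
  rcases lt_or_ge b 0 with hb0 | hb0
  · have hto := hQ.Icc_to_zero_mem_of_windows_subset hC ha (by omega)
    have hcross := hQ.Icc_around_zero_mem_of_windows_subset hC (b := 1) (by omega) hb0 zero_le_one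
      (by omega)
    simpa using (hQ.Icc_mem_of_staggered hto hcross (by omega) hb0 zero_lt_one).2.2.1
  rcases le_or_gt a 0 with ha0 | ha0
  · exact hQ.Icc_around_zero_mem_of_windows_subset hC ha ha0 hb0 hb
  · have hfrom := hQ.Icc_from_zero_mem_of_windows_subset hC hb0 hb
    have hcross := hQ.Icc_around_zero_mem_of_windows_subset hC (a := -1) (b := a - 1) (by omega)
      (by omega) (by omega) (by omega)
    simpa using (hQ.Icc_mem_of_staggered hcross hfrom (by omega) (by omega) (by omega)).2.2.2

lemma patchworkClosure_windows (n : ℕ) :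
    patchworkClosure (windows n) =
      insert ∅ (insert univ (intervalsWithin (1 - (n : ℤ)) (n - 1))) := by
  refine (patchworkClosure_subset (isPatchwork_intervalsWithin _ _) ?_).antisymm
    (subset_patchworkClosure fun Q hQ hC => ?_)
  · rintro _ ⟨i, ⟨hi1, hin⟩, rfl⟩
    exact mem_insert_of_mem _ <| mem_insert_of_mem _
      ⟨i - n, i - 1, by omega, by omega, by omega, rfl⟩
  · exact insert_subset hQ.1 (insert_subset hQ.2.1 (hQ.intervalsWithin_subset_of_windows_subset hC))

end Windows

lemma encard_windows (n : ℕ) : (windows n).encard = n := by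
  have hinj : InjOn (fun i : ℤ => Icc (i - n) (i - 1)) (Icc 1 n) := by
    rintro i ⟨hi1, hin⟩ j - hij
    have := ((Icc_eq_Icc_iff (by omega)).1 hij).1
    omega
  rw [windows, hinj.encard_image, ← Finset.coe_Icc, encard_coe_eq_coe_finsetCard, Int.card_Icc]
  simp

lemma choose_two_card_Icc (n : ℕ) :
    ((Finset.Icc (1 - (n : ℤ)) (n - 1)).card + 1).choose 2 = 2 * n ^ 2 - n := by
  obtain _ | m := n
  · rfl
  have hcard : (Finset.Icc (1 - ((m + 1 : ℕ) : ℤ)) ((m + 1 : ℕ) - 1)).card + 1 = 2 * (m + 1) := by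
    rw [Int.card_Icc]; omega
  rw [hcard, Nat.choose_two_right, Nat.mul_assoc, Nat.mul_div_cancel_left _ two_pos,
    show 2 * (m + 1) - 1 = 2 * m + 1 by omega]
  symm
  apply Nat.sub_eq_of_eq_add
  ring

lemma encard_patchworkClosure_windows (n : ℕ) :
    (patchworkClosure (windows n)).encard = ((2 * n ^ 2 - n + 2 : ℕ) : ℕ∞) := by
  have hempty : ∅ ∉ insert univ (intervalsWithin (1 - (n : ℤ)) (n - 1)) := by
    rintro (h | ⟨a, b, -, hab, -, h⟩)
    · exact empty_ne_univ h
    · exact (nonempty_Icc.2 hab).ne_empty h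
  have huniv : univ ∉ intervalsWithin (1 - (n : ℤ)) (n - 1) := by
    rintro ⟨a, b, -, -, -, h⟩
    exact not_le.2 (lt_add_one b) (h.symm ▸ mem_univ (b + 1)).2
  rw [patchworkClosure_windows, encard_insert_of_notMem hempty, encard_insert_of_notMem huniv,
    encard_intervalsWithin, choose_two_card_Icc]
  push_cast
  ring

theorem statement18 (n : ℕ) :
    ∃ (Ω : Type) (_ : LinearOrder Ω) (C : Set (Set Ω)),
      C.encard = (n : ℕ∞) ∧ (∀ A ∈ C, IsConvex (· ≤ · : Ω → Ω → Prop) A) ∧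
      (patchworkClosure C).encard = ((2 * n ^ 2 - n + 2 : ℕ) : ℕ∞) := by
  refine ⟨ℤ, inferInstance, windows n, encard_windows n, ?_, encard_patchworkClosure_windows n⟩
  rintro _ ⟨i, -, rfl⟩
  exact isConvex_Icc _ _
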